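/- Let T_A, T_B be strongly continuous one-parameter groups on real Banach spaces X, Y, with T_A admitting a dichotomy projection P₊ with constants k ≥ 1, α > 0 and associated Green kernel G_A. Let f : X × Y → X be bounded and Lipschitz with constant L, with 4kα⁻¹L < 1. Define h(ξ,η) := −∫_ℝ G_A(−s) f(U₁(s;ξ,η), U₂(s;ξ,η)) ds, where (U₁(·;ξ,η),U₂(·;ξ,η)) is the unique mild solution of the semilinear system with initial value (ξ,η), and define g(ξ,η) := w_{ξ,η}(0), where w_{ξ,η} is the unique bounded continuous function with w_{ξ,η}(t) = ∫_ℝ G_A(t−s) f(T_A(s)ξ + w_{ξ,η}(s), T_B(s)η) ds for all t. Set H(x,y) := (x + h(x,y), y) and G(x,y) := (x + g(x,y), y). Then H(G(v₁,v₂)) = (v₁,v₂) for every (v₁,v₂) ∈ X × Y. -/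

import Mathlib

open MeasureTheory Set

noncomputable section

/-- A strongly continuous one-parameter group on a real Banach space. -/
def IsC0Group {X : Type*} [NormedAddCommGroup X] [NormedSpace ℝ X]
    (T : ℝ → X →L[ℝ] X) : Prop :=
  T 0 = ContinuousLinearMap.id ℝ X ∧
  (∀ t s : ℝ, T (t + s) = (T t).comp (T s)) ∧
  (∀ x : X, Continuous fun t => T t x)

/-- `P` is a dichotomy projection for the group `T` with constants `k ≥ 1`, `α > 0`. -/
def IsDichotomyProjection {X : Type*} [NormedAddCommGroup X] [NormedSpace ℝ X]
    (T : ℝ → X →L[ℝ] X) (P : X →L[ℝ] X) (k α : ℝ) : Prop :=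
  P.comp P = P ∧
  (∀ t : ℝ, P.comp (T t) = (T t).comp P) ∧
  (∀ x : X, ∀ t : ℝ, 0 ≤ t → ‖T t (P x)‖ ≤ k * Real.exp (-α * t) * ‖P x‖) ∧
  (∀ x : X, ∀ t : ℝ, t ≤ 0 → ‖T t (x - P x)‖ ≤ k * Real.exp (α * t) * ‖x - P x‖)

/-- The Green kernel associated to the dichotomy: `G_A(t) = T(t)P₊` for `t ≥ 0`,
`G_A(t) = −T(t)P₋` for `t < 0`. -/
def greenKernel {X : Type*} [NormedAddCommGroup X] [NormedSpace ℝ X]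
    (T : ℝ → X →L[ℝ] X) (P : X →L[ℝ] X) (t : ℝ) : X →L[ℝ] X :=
  if 0 ≤ t then (T t).comp P else -((T t).comp (ContinuousLinearMap.id ℝ X - P))

/-- Mild solution of the semilinear system `∂ₜu₁ = Au₁ + f(u₁,u₂)`, `∂ₜu₂ = Bu₂`. -/
def IsMildSolution {X Y : Type*} [NormedAddCommGroup X] [NormedSpace ℝ X]
    [NormedAddCommGroup Y] [NormedSpace ℝ Y]
    (TA : ℝ → X →L[ℝ] X) (TB : ℝ → Y →L[ℝ] Y)
    (f : X → Y → X) (u₁ : ℝ → X) (u₂ : ℝ → Y) : Prop :=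
  Continuous u₁ ∧ Continuous u₂ ∧
  (∀ t : ℝ, u₁ t = TA t (u₁ 0) + ∫ s in (0:ℝ)..t, TA (t - s) (f (u₁ s) (u₂ s))) ∧
  (∀ t : ℝ, u₂ t = TB t (u₂ 0))

/-- Mild solution of the linear system `∂ₜv₁ = Av₁`, `∂ₜv₂ = Bv₂`. -/
def IsLinearMildSolution {X Y : Type*} [NormedAddCommGroup X] [NormedSpace ℝ X]
    [NormedAddCommGroup Y] [NormedSpace ℝ Y]
    (TA : ℝ → X →L[ℝ] X) (TB : ℝ → Y →L[ℝ] Y)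
    (v₁ : ℝ → X) (v₂ : ℝ → Y) : Prop :=
  Continuous v₁ ∧ Continuous v₂ ∧
  (∀ t : ℝ, v₁ t = TA t (v₁ 0)) ∧ (∀ t : ℝ, v₂ t = TB t (v₂ 0))

variable {X Y : Type*} [NormedAddCommGroup X] [NormedSpace ℝ X] [CompleteSpace X]
  [NormedAddCommGroup Y] [NormedSpace ℝ Y] [CompleteSpace Y]

/-!
Let `w = w v₁ v₂` and `F s = f (TA s v₁ + w s) (TB s v₂)`. Comparing the Green kernel at `t - s`
with `TA t` applied to it at `-s`, the two differ exactly on the interval between `0` and `t`, so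
`w t = TA t (w 0) + ∫ s in 0..t, TA (t - s) (F s)`. Hence `t ↦ TA t v₁ + w t` is a mild solution
with initial value `ξ = v₁ + g v₁ v₂`. Mild solutions are unique (Grönwall, with `TA` locally
bounded by Banach–Steinhaus), so it is `U₁ ξ v₂`, and then `h ξ v₂ = -∫ G(-s) F(s) ds = -w 0`.
-/

open Filter Topology

theorem eq_zero_of_le_mul_intervalIntegral {φ : ℝ → ℝ} {K b : ℝ} (hφ : Continuous φ)
    (hφ₀ : 0 ≤ φ) (hle : ∀ t ∈ Icc 0 b, φ t ≤ K * ∫ s in 0..t, φ s) :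
    ∀ t ∈ Icc 0 b, φ t = 0 := by
  set Φ : ℝ → ℝ := fun t => ∫ s in 0..t, φ s
  have hΦ (t : ℝ) : HasDerivAt Φ (φ t) t := hφ.integral_hasStrictDerivAt 0 t |>.hasDerivAt
  have hΦ₀ : ∀ t ∈ Icc 0 b, Φ t = 0 := by
    refine eq_zero_of_abs_deriv_le_mul_abs_self_of_eq_zero_right (K := K)
      (fun t _ => (hΦ t).continuousAt.continuousWithinAt) (fun t _ => (hΦ t).hasDerivWithinAt)
      intervalIntegral.integral_same fun t ht => ?_
    have hΦt : 0 ≤ Φ t := intervalIntegral.integral_nonneg ht.1 fun s _ => hφ₀ s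
    rw [Real.norm_of_nonneg (hφ₀ t), Real.norm_of_nonneg hΦt]
    exact hle t (Ico_subset_Icc_self ht)
  intro t ht
  have hΦt : (∫ s in 0..t, φ s) = 0 := hΦ₀ t ht
  exact le_antisymm (by simpa [hΦt] using hle t ht) (hφ₀ t)

theorem eq_zero_of_le_mul_abs_intervalIntegral {φ : ℝ → ℝ} {K b : ℝ} (hφ : Continuous φ)
    (hφ₀ : 0 ≤ φ) (hle : ∀ t ∈ Icc (-b) b, φ t ≤ K * |∫ s in 0..t, φ s|) :
    ∀ t ∈ Icc (-b) b, φ t = 0 := by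
  intro t ht
  rcases le_total 0 t with h₀ | h₀
  · refine eq_zero_of_le_mul_intervalIntegral (K := K) hφ hφ₀ (fun r hr => ?_) t ⟨h₀, ht.2⟩
    rw [← abs_of_nonneg (intervalIntegral.integral_nonneg hr.1 fun s _ => hφ₀ s)]
    exact hle r ⟨by linarith [hr.1, ht.1, ht.2], hr.2⟩
  · have := eq_zero_of_le_mul_intervalIntegral (φ := fun s => φ (-s)) (K := K) (b := b)
      (hφ.comp continuous_neg) (fun s => hφ₀ (-s)) (fun r hr => ?_) (-t)
      ⟨by linarith, by linarith [ht.1]⟩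
    · simpa using this
    rw [intervalIntegral.integral_comp_neg, neg_zero,
      ← abs_of_nonneg (intervalIntegral.integral_nonneg (by linarith [hr.1]) fun s _ => hφ₀ s),
      intervalIntegral.integral_symm, abs_neg]
    exact hle (-r) ⟨by linarith [hr.2], by linarith [hr.1, ht.1, ht.2]⟩

section Semigroup

variable {E : Type*} [NormedAddCommGroup E] [NormedSpace ℝ E] {T : ℝ → E →L[ℝ] E}

namespace IsC0Group

theorem zero_apply (hT : IsC0Group T) (x : E) : T 0 x = x := by
  rw [hT.1]; rfl

theorem apply_apply (hT : IsC0Group T) (a b : ℝ) (x : E) : T a (T b x) = T (a + b) x := by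
  rw [hT.2.1 a b]; rfl

variable [CompleteSpace E]

theorem exists_norm_le_of_abs_le (hT : IsC0Group T) (b : ℝ) :
    ∃ M, 0 ≤ M ∧ ∀ r, |r| ≤ b → ‖T r‖ ≤ M := by
  have hpt (x : E) : ∃ C, ∀ r : Icc (-b) b, ‖T r x‖ ≤ C := by
    obtain ⟨C, hC⟩ := isCompact_Icc.bddAbove_image (hT.2.2 x).norm.continuousOn
    exact ⟨C, fun r => hC ⟨r, r.2, rfl⟩⟩
  obtain ⟨M, hM⟩ := banach_steinhaus hpt
  exact ⟨max M 0, le_max_right _ _, fun r hr =>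
    (hM ⟨r, abs_le.mp hr⟩).trans (le_max_left _ _)⟩

theorem continuous_apply_comp (hT : IsC0Group T) {a : ℝ → ℝ} {z : ℝ → E}
    (ha : Continuous a) (hz : Continuous z) : Continuous fun s => T (a s) (z s) := by
  refine continuous_iff_continuousAt.2 fun s₀ => ?_
  obtain ⟨M, -, hM⟩ := hT.exists_norm_le_of_abs_le (|a s₀| + 1)
  have hnear : ∀ᶠ s in 𝓝 s₀, |a s| ≤ |a s₀| + 1 :=
    (ha.abs.tendsto s₀).eventually (gt_mem_nhds (lt_add_one _)) |>.mono fun _ => le_of_lt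
  -- `T (a s)` is uniformly bounded near `s₀`, so moving the argument costs `M * ‖z s - z s₀‖`
  have hmove : Tendsto (fun s => T (a s) (z s) - T (a s) (z s₀)) (𝓝 s₀) (𝓝 0) := by
    refine squeeze_zero_norm' (hnear.mono fun s hs => ?_)
      (by simpa using ((hz.tendsto s₀).sub_const (z s₀)).norm.const_mul M)
    rw [← map_sub]
    exact (T (a s)).le_of_opNorm_le (hM _ hs) _
  simpa [ContinuousAt] using hmove.add (((hT.2.2 (z s₀)).comp ha).tendsto s₀)

end IsC0Group

end Semigroup

section GreenKernel

variable {E : Type*} [NormedAddCommGroup E] [NormedSpace ℝ E] {T : ℝ → E →L[ℝ] E}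
  {P : E →L[ℝ] E} {k α : ℝ}

theorem greenKernel_of_nonneg {r : ℝ} (hr : 0 ≤ r) (x : E) :
    greenKernel T P r x = T r (P x) := by
  simp [greenKernel, hr]

theorem greenKernel_of_neg {r : ℝ} (hr : r < 0) (x : E) :
    greenKernel T P r x = -T r (x - P x) := by
  simp [greenKernel, not_le.2 hr]

theorem greenKernel_apply (r : ℝ) (x : E) :
    greenKernel T P r x = T r (P x) - if r < 0 then T r x else 0 := by
  rcases lt_or_ge r 0 with hr | hr
  · rw [greenKernel_of_neg hr, if_pos hr, map_sub, neg_sub]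
  · rw [greenKernel_of_nonneg hr, if_neg hr.not_gt, sub_zero]

theorem IsDichotomyProjection.norm_greenKernel_apply_le (hP : IsDichotomyProjection T P k α)
    (hk : 0 ≤ k) (r : ℝ) (x : E) :
    ‖greenKernel T P r x‖ ≤ k * (1 + ‖P‖) * Real.exp (-α * |r|) * ‖x‖ := by
  have hPx : ‖P x‖ ≤ (1 + ‖P‖) * ‖x‖ := by
    nlinarith [P.le_opNorm x, norm_nonneg x]
  rcases lt_or_ge r 0 with hr | hr
  · have hQx : ‖x - P x‖ ≤ (1 + ‖P‖) * ‖x‖ := by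
      nlinarith [norm_sub_le x (P x), P.le_opNorm x]
    rw [greenKernel_of_neg hr, norm_neg, abs_of_neg hr, neg_mul_neg]
    calc ‖T r (x - P x)‖ ≤ k * Real.exp (α * r) * ‖x - P x‖ := hP.2.2.2 x r hr.le
      _ ≤ k * Real.exp (α * r) * ((1 + ‖P‖) * ‖x‖) := by gcongr
      _ = _ := by ring
  · rw [greenKernel_of_nonneg hr, abs_of_nonneg hr]
    calc ‖T r (P x)‖ ≤ k * Real.exp (-α * r) * ‖P x‖ := hP.2.2.1 x r hr
      _ ≤ k * Real.exp (-α * r) * ((1 + ‖P‖) * ‖x‖) := by gcongr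
      _ = _ := by ring

theorem integrable_exp_neg_mul_abs_sub (hα : 0 < α) (t : ℝ) :
    Integrable fun s : ℝ => Real.exp (-α * |t - s|) := by
  have h : Integrable fun s : ℝ => Real.exp (-α * |s|) := by
    rw [← integrableOn_univ, ← Iic_union_Ioi (a := (0 : ℝ))]
    refine IntegrableOn.union ?_ ?_
    · refine (integrableOn_exp_mul_Iic hα 0).congr_fun (fun s hs => ?_) measurableSet_Iic
      simp only [abs_of_nonpos (mem_Iic.1 hs), neg_mul, mul_neg, neg_neg]
    · refine (integrableOn_exp_mul_Ioi (neg_lt_zero.2 hα) 0).congr_fun (fun s hs => ?_)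
        measurableSet_Ioi
      rw [abs_of_pos hs]
  simpa only [abs_sub_comm] using h.comp_sub_right t

theorem greenKernel_sub_apply_greenKernel (hT : IsC0Group T) (F : ℝ → E) (t : ℝ) :
    (fun s => greenKernel T P (t - s) (F s) - T t (greenKernel T P (-s) (F s))) =
      fun s => (Ioc 0 t).indicator (fun s => T (t - s) (F s)) s -
        (Ioc t 0).indicator (fun s => T (t - s) (F s)) s := by
  funext s
  simp only [greenKernel_apply, map_sub, apply_ite (T t), map_zero, hT.apply_apply,
    ← sub_eq_add_neg, indicator, mem_Ioc, neg_lt_zero]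
  split_ifs <;> first | (exfalso; grind) | abel

variable [CompleteSpace E]

theorem IsC0Group.integrable_greenKernel_apply (hT : IsC0Group T)
    (hP : IsDichotomyProjection T P k α) (hk : 0 ≤ k) (hα : 0 < α) {F : ℝ → E}
    (hF : Continuous F) {C : ℝ} (hFC : ∀ s, ‖F s‖ ≤ C) (t : ℝ) :
    Integrable fun s => greenKernel T P (t - s) (F s) := by
  have hmeas : AEStronglyMeasurable (fun s => greenKernel T P (t - s) (F s)) := by
    simp only [greenKernel_apply]
    exact ((hT.continuous_apply_comp (by fun_prop) (P.continuous.comp hF)).stronglyMeasurable.sub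
      ((hT.continuous_apply_comp (by fun_prop) hF).stronglyMeasurable.ite
        (measurableSet_lt (by fun_prop) measurable_const)
        stronglyMeasurable_const)).aestronglyMeasurable
  refine ((integrable_exp_neg_mul_abs_sub hα t).const_mul (k * (1 + ‖P‖) * C)).mono' hmeas
    (ae_of_all _ fun s => ?_)
  calc ‖greenKernel T P (t - s) (F s)‖
      ≤ k * (1 + ‖P‖) * Real.exp (-α * |t - s|) * ‖F s‖ := hP.norm_greenKernel_apply_le hk _ _
    _ ≤ k * (1 + ‖P‖) * Real.exp (-α * |t - s|) * C := by gcongr; exact hFC s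
    _ = _ := by ring

end GreenKernel

section MildSolutions

variable {E : Type*} [NormedAddCommGroup E] [NormedSpace ℝ E] [CompleteSpace E]
  {T : ℝ → E →L[ℝ] E}

theorem IsC0Group.mild_solution_unique {N : ℝ → E → E} {K : NNReal} (hT : IsC0Group T)
    (hN : Continuous (Function.uncurry N)) (hNK : ∀ s, LipschitzWith K (N s)) {u v : ℝ → E}
    (hu : Continuous u) (hv : Continuous v)
    (hu_eq : ∀ t, u t = T t (u 0) + ∫ s in 0..t, T (t - s) (N s (u s)))
    (hv_eq : ∀ t, v t = T t (v 0) + ∫ s in 0..t, T (t - s) (N s (v s))) (h₀ : u 0 = v 0) :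
    u = v := by
  funext t
  obtain ⟨M, hM₀, hM⟩ := hT.exists_norm_le_of_abs_le |t|
  have hcont {z : ℝ → E} (hz : Continuous z) (r : ℝ) :
      Continuous fun s => T (r - s) (N s (z s)) :=
    hT.continuous_apply_comp (by fun_prop) (hN.comp (continuous_id.prodMk hz))
  have hle : ∀ r ∈ Icc (-|t|) |t|, ‖u r - v r‖ ≤ M * K * |∫ s in 0..r, ‖u s - v s‖| := by
    intro r hr
    have hdiff : u r - v r = ∫ s in 0..r, T (r - s) (N s (u s) - N s (v s)) := by
      simp only [map_sub]
      rw [intervalIntegral.integral_sub ((hcont hu r).intervalIntegrable _ _)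
        ((hcont hv r).intervalIntegrable _ _), hu_eq r, hv_eq r, h₀]
      abel
    rw [hdiff, ← abs_of_nonneg (by positivity : 0 ≤ M * K), ← abs_mul,
      ← intervalIntegral.integral_const_mul]
    refine intervalIntegral.norm_integral_le_abs_of_norm_le
      (ae_restrict_of_forall_mem measurableSet_uIoc fun s hs => ?_)
      ((by fun_prop : Continuous fun s => M * K * ‖u s - v s‖).intervalIntegrable _ _)
    have hrs : |r - s| ≤ |t| := by
      rw [abs_le]
      rcases Set.mem_uIoc.1 hs with h | h <;> constructor <;> linarith [h.1, h.2, hr.1, hr.2]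
    calc ‖T (r - s) (N s (u s) - N s (v s))‖ ≤ M * ‖N s (u s) - N s (v s)‖ :=
          (T (r - s)).le_of_opNorm_le (hM _ hrs) _
      _ ≤ M * (K * ‖u s - v s‖) := by gcongr; exact (hNK s).norm_sub_le _ _
      _ = M * K * ‖u s - v s‖ := by ring
  have := eq_zero_of_le_mul_abs_intervalIntegral (by fun_prop) (fun s => norm_nonneg _) hle t
    ⟨neg_abs_le t, le_abs_self t⟩
  exact sub_eq_zero.1 (norm_eq_zero.1 this)

variable {P : E →L[ℝ] E} {k α : ℝ}

theorem IsC0Group.eq_apply_add_intervalIntegral_of_eq_integral_greenKernel (hT : IsC0Group T)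
    (hP : IsDichotomyProjection T P k α) (hk : 0 ≤ k) (hα : 0 < α) {F : ℝ → E}
    (hF : Continuous F) {C : ℝ} (hFC : ∀ s, ‖F s‖ ≤ C) {w : ℝ → E}
    (hw : ∀ t, w t = ∫ s, greenKernel T P (t - s) (F s)) (t : ℝ) :
    w t = T t (w 0) + ∫ s in 0..t, T (t - s) (F s) := by
  have hG := hT.integrable_greenKernel_apply hP hk hα hF hFC
  have hTF : Continuous fun s => T (t - s) (F s) := hT.continuous_apply_comp (by fun_prop) hF
  rw [← sub_eq_iff_eq_add']
  calc w t - T t (w 0)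
      = ∫ s, (greenKernel T P (t - s) (F s) - T t (greenKernel T P (-s) (F s))) := by
        rw [hw t, hw 0, ← ContinuousLinearMap.integral_comp_comm _ (hG 0),
          ← integral_sub (hG t) ((T t).integrable_comp (hG 0))]
        simp only [zero_sub]
    _ = ∫ s in 0..t, T (t - s) (F s) := by
        rw [greenKernel_sub_apply_greenKernel hT, integral_sub
          (hTF.integrableOn_Ioc.integrable_indicator measurableSet_Ioc)
          (hTF.integrableOn_Ioc.integrable_indicator measurableSet_Ioc),
          integral_indicator measurableSet_Ioc, integral_indicator measurableSet_Ioc]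
        rfl

end MildSolutions

theorem continuous_uncurry_of_norm_sub_le {E E' G : Type*} [SeminormedAddCommGroup E]
    [SeminormedAddCommGroup E'] [SeminormedAddCommGroup G] {f : E → E' → G} {L : ℝ}
    (hf : ∀ x x' y y', ‖f x y - f x' y'‖ ≤ L * (‖x - x'‖ + ‖y - y'‖)) :
    Continuous (Function.uncurry f) := by
  refine (LipschitzWith.of_dist_le' (K := 2 * max L 0) fun p q => ?_).continuous
  rw [dist_eq_norm, Prod.dist_eq, dist_eq_norm, dist_eq_norm]
  calc ‖f p.1 p.2 - f q.1 q.2‖ ≤ L * (‖p.1 - q.1‖ + ‖p.2 - q.2‖) := hf _ _ _ _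
    _ ≤ max L 0 * (‖p.1 - q.1‖ + ‖p.2 - q.2‖) := by gcongr; exact le_max_left _ _
    _ ≤ max L 0 * (2 * max ‖p.1 - q.1‖ ‖p.2 - q.2‖) := by
        gcongr; linarith [le_max_left ‖p.1 - q.1‖ ‖p.2 - q.2‖, le_max_right ‖p.1 - q.1‖ ‖p.2 - q.2‖]
    _ = _ := by ring

theorem H_comp_G_eq_id_general
    (TA : ℝ → X →L[ℝ] X) (TB : ℝ → Y →L[ℝ] Y)
    (hTA : IsC0Group TA)
    (P : X →L[ℝ] X) (k α : ℝ) (hk : 1 ≤ k) (hα : 0 < α)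
    (hP : IsDichotomyProjection TA P k α)
    (f : X → Y → X) (Mf L : ℝ)
    (hfB : ∀ (x : X) (y : Y), ‖f x y‖ ≤ Mf)
    (hfL : ∀ (x x' : X) (y y' : Y), ‖f x y - f x' y'‖ ≤ L * (‖x - x'‖ + ‖y - y'‖))
    -- the family of mild solutions with prescribed initial values, defining h
    (U₁ : X → Y → ℝ → X) (U₂ : X → Y → ℝ → Y)
    (hU : ∀ (ξ : X) (η : Y), IsMildSolution TA TB f (U₁ ξ η) (U₂ ξ η) ∧
      U₁ ξ η 0 = ξ ∧ U₂ ξ η 0 = η)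
    (h : X → Y → X)
    (hh : ∀ (ξ : X) (η : Y),
      h ξ η = -∫ s : ℝ, greenKernel TA P (-s) (f (U₁ ξ η s) (U₂ ξ η s)))
    -- the family of bounded fixed points, defining g
    (w : X → Y → ℝ → X)
    (hw : ∀ (ξ : X) (η : Y), Continuous (w ξ η) ∧
      (∃ C : ℝ, ∀ t : ℝ, ‖w ξ η t‖ ≤ C) ∧
      (∀ t : ℝ, w ξ η t
        = ∫ s : ℝ, greenKernel TA P (t - s) (f (TA s ξ + w ξ η s) (TB s η))))
    (g : X → Y → X) (hg : ∀ (ξ : X) (η : Y), g ξ η = w ξ η 0) :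
    ∀ (v₁ : X) (v₂ : Y),
      (((v₁ + g v₁ v₂) + h (v₁ + g v₁ v₂) v₂, v₂) : X × Y) = (v₁, v₂) := by
  intro v₁ v₂
  set ξ := v₁ + g v₁ v₂
  obtain ⟨hwc, -, hw⟩ := hw v₁ v₂
  obtain ⟨⟨hU₁c, hU₂c, hU₁, hU₂⟩, hU₁0, hU₂0⟩ := hU ξ v₂
  have hy : U₂ ξ v₂ = fun s => TB s v₂ := funext fun s => by rw [hU₂ s, hU₂0]
  simp only [hy] at hU₂c hU₁
  have hf := continuous_uncurry_of_norm_sub_le hfL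
  have hF : Continuous fun s => f (TA s v₁ + w v₁ v₂ s) (TB s v₂) :=
    hf.comp (((hTA.2.2 v₁).add hwc).prodMk hU₂c)
  have hmild := hTA.eq_apply_add_intervalIntegral_of_eq_integral_greenKernel hP
    (zero_le_one.trans hk) hα hF (fun s => hfB _ _) hw
  have hU₁_eq : U₁ ξ v₂ = fun t => TA t v₁ + w v₁ v₂ t := by
    refine hTA.mild_solution_unique (N := fun s x => f x (TB s v₂)) (K := L.toNNReal)
      (hf.comp (continuous_snd.prodMk (hU₂c.comp continuous_fst)))
      (fun s => LipschitzWith.of_dist_le' fun x x' => by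
        simpa [dist_eq_norm] using hfL x x' (TB s v₂) (TB s v₂))
      hU₁c ((hTA.2.2 v₁).add hwc) hU₁ (fun t => ?_) ?_
    · rw [hmild t, hTA.zero_apply, map_add]
      abel
    · rw [hU₁0, hTA.zero_apply, ← hg]
  have hhξ : h ξ v₂ = -g v₁ v₂ := by
    rw [hh, hU₁_eq, hy, hg, hw 0]
    simp only [zero_sub]
  simp [ξ, hhξ]

/-- `H ∘ G = id` on `X × Y`. -/
theorem H_comp_G_eq_id
    (TA : ℝ → X →L[ℝ] X) (TB : ℝ → Y →L[ℝ] Y)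
    (hTA : IsC0Group TA) (hTB : IsC0Group TB)
    (P : X →L[ℝ] X) (k α : ℝ) (hk : 1 ≤ k) (hα : 0 < α)
    (hP : IsDichotomyProjection TA P k α)
    (f : X → Y → X) (Mf L : ℝ)
    (hfB : ∀ (x : X) (y : Y), ‖f x y‖ ≤ Mf)
    (hfL : ∀ (x x' : X) (y y' : Y), ‖f x y - f x' y'‖ ≤ L * (‖x - x'‖ + ‖y - y'‖))
    (hsmall : 4 * k * α⁻¹ * L < 1)
    -- the family of mild solutions with prescribed initial values, defining h
    (U₁ : X → Y → ℝ → X) (U₂ : X → Y → ℝ → Y)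
    (hU : ∀ (ξ : X) (η : Y), IsMildSolution TA TB f (U₁ ξ η) (U₂ ξ η) ∧
      U₁ ξ η 0 = ξ ∧ U₂ ξ η 0 = η)
    (h : X → Y → X)
    (hh : ∀ (ξ : X) (η : Y),
      h ξ η = -∫ s : ℝ, greenKernel TA P (-s) (f (U₁ ξ η s) (U₂ ξ η s)))
    -- the family of bounded fixed points, defining g
    (w : X → Y → ℝ → X)
    (hw : ∀ (ξ : X) (η : Y), Continuous (w ξ η) ∧
      (∃ C : ℝ, ∀ t : ℝ, ‖w ξ η t‖ ≤ C) ∧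
      (∀ t : ℝ, w ξ η t
        = ∫ s : ℝ, greenKernel TA P (t - s) (f (TA s ξ + w ξ η s) (TB s η))))
    (g : X → Y → X) (hg : ∀ (ξ : X) (η : Y), g ξ η = w ξ η 0) :
    ∀ (v₁ : X) (v₂ : Y),
      (((v₁ + g v₁ v₂) + h (v₁ + g v₁ v₂) v₂, v₂) : X × Y) = (v₁, v₂) :=
  H_comp_G_eq_id_general TA TB hTA P k α hk hα hP f Mf L hfB hfL U₁ U₂ hU h hh w hw g hg

end
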